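/- arXiv:cs/0608120 — 2 statements merged into one kernel-verified Lean document; each statement's English description precedes it below -/
import Mathlib

section
/- Let k ≥ 1 be a natural number and let x, y be ordinals such that x < y and such that z + ω^(k-1) < y for every ordinal z with x ≤ z < y. Then x + ω^k ≤ y. -/
/-! Starting from `x` and repeatedly adding `ω ^ (k - 1)` never reaches `y`, so `x + ω ^ (k - 1) * n < y`
for every `n : ℕ`; the supremum of these is `x + ω ^ (k - 1) * ω`, which dominates `x + ω ^ k`. -/

open Ordinal

namespace Ordinal

section

variable {a x y : Ordinal}

theorem add_mul_natCast_lt_of_forall_add_lt (hxy : x < y) (h : ∀ z, x ≤ z → z < y → z + a < y)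
    (n : ℕ) : x + a * n < y := by
  induction n with
  | zero => simpa using hxy
  | succ n ih =>
    calc x + a * (n + 1 : ℕ) = x + a * n + a := by push_cast; rw [mul_add_one, add_assoc]
      _ < y := h _ le_self_add ih

theorem add_mul_omega0_le_of_forall_add_lt (hxy : x < y) (h : ∀ z, x ≤ z → z < y → z + a < y) :
    x + a * ω ≤ y := by
  rcases eq_zero_or_pos a with rfl | ha
  · simpa using hxy.le
  rw [add_le_iff_of_isSuccLimit (isSuccLimit_mul_right ha isSuccLimit_omega0)]
  intro c hc
  obtain ⟨m, hm, hcm⟩ := (lt_mul_iff_of_isSuccLimit isSuccLimit_omega0).1 hc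
  obtain ⟨n, rfl⟩ := lt_omega0.1 hm
  exact ((add_le_add_right hcm.le x).trans_lt (add_mul_natCast_lt_of_forall_add_lt hxy h n)).le

end

theorem omega0_opow_natCast_le_opow_pred_mul_omega0 (k : ℕ) :
    ω ^ (k : Ordinal) ≤ ω ^ ((k - 1 : ℕ) : Ordinal) * ω := by
  rw [← opow_succ, Order.succ_eq_add_one, ← Nat.cast_succ]
  exact opow_le_opow_right omega0_pos (Nat.cast_le.2 (by omega))

end Ordinal

theorem add_omega0_pow_le_general (k : ℕ) (x y : Ordinal) (hxy : x < y)
    (h : ∀ z, x ≤ z → z < y → z + Ordinal.omega0 ^ ((k - 1 : ℕ) : Ordinal) < y) :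
    x + Ordinal.omega0 ^ (k : Ordinal) ≤ y :=
  (add_le_add_right (omega0_opow_natCast_le_opow_pred_mul_omega0 k) x).trans
    (add_mul_omega0_le_of_forall_add_lt hxy h)

theorem add_omega0_pow_le (k : ℕ) (hk : 1 ≤ k) (x y : Ordinal) (hxy : x < y)
    (h : ∀ z, x ≤ z → z < y → z + Ordinal.omega0 ^ ((k - 1 : ℕ) : Ordinal) < y) :
    x + Ordinal.omega0 ^ (k : Ordinal) ≤ y :=
  add_omega0_pow_le_general k x y hxy h
end

section
/- Let k ≥ 2 and 1 ≤ k' ≤ k−2 be natural numbers, let p and q be atomic propositions, and let σ be a model of LTL(ω^k) viewed inside LTL(ω^ω). Then σ, 0 ⊨ (□^{ω^(k'+1)} ◇^{ω^(k'+1)} X^{ω^(k')} p) ⇒ (X^{ω^(k'+1)} q) if and only if the following implication holds: if the set of natural numbers n ≥ 1 such that the index of p belongs to σ(ω^(k')·n) is infinite, then the index of q belongs to σ(ω^(k'+1)). -/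
open Ordinal

/-- Formulas of LTL(ω^ω): atoms `pₙ`, negation, conjunction, `X^β` for `β < ω^ω`,
and `U^β'` for `β' ≤ ω^ω`. -/
inductive LTLFormula : Type 1 where
  | atom : ℕ → LTLFormula
  | neg : LTLFormula → LTLFormula
  | and : LTLFormula → LTLFormula → LTLFormula
  | next : (β : Ordinal) → β < Ordinal.omega0 ^ Ordinal.omega0 → LTLFormula → LTLFormula
  | until : (β : Ordinal) → β ≤ Ordinal.omega0 ^ Ordinal.omega0 →
      LTLFormula → LTLFormula → LTLFormula

/-- Satisfaction `σ, β ⊨ φ` for LTL(ω^ω). -/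
def LTLSat (σ : Ordinal → Set ℕ) : LTLFormula → Ordinal → Prop
  | .atom n, β => n ∈ σ β
  | .neg φ, β => ¬ LTLSat σ φ β
  | .and φ ψ, β => LTLSat σ φ β ∧ LTLSat σ ψ β
  | .next β' _ φ, β => LTLSat σ φ (β + β')
  | .until β' _ φ ψ, β =>
      ∃ γ < β', LTLSat σ ψ (β + γ) ∧ ∀ γ' < γ, LTLSat σ φ (β + γ')

/-- A tautology `⊤`. -/
def LTLFormula.top : LTLFormula := .neg ((LTLFormula.atom 0).and (.neg (.atom 0)))

/-- `◇^β φ := ⊤ U^β φ`. -/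
def LTLFormula.diamond (β : Ordinal) (h : β ≤ Ordinal.omega0 ^ Ordinal.omega0)
    (φ : LTLFormula) : LTLFormula := .until β h .top φ

/-- `□^β φ := ¬ ◇^β ¬ φ`. -/
def LTLFormula.box (β : Ordinal) (h : β ≤ Ordinal.omega0 ^ Ordinal.omega0)
    (φ : LTLFormula) : LTLFormula := .neg (.diamond β h (.neg φ))

/-- `φ ⇒ ψ := ¬(φ ∧ ¬ψ)`. -/
def LTLFormula.implies (φ ψ : LTLFormula) : LTLFormula := .neg (φ.and ψ.neg)

lemma omega0_pow_nat_lt (i : ℕ) :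
    Ordinal.omega0 ^ (i : Ordinal) < Ordinal.omega0 ^ Ordinal.omega0 :=
  (opow_lt_opow_iff_right Ordinal.one_lt_omega0).2 (Ordinal.nat_lt_omega0 i)

/-!
Writing `w = ω ^ k'`, we have `ω ^ (k' + 1) = w * ω`, and the antecedent says that every
`γ < w * ω` is followed by some `δ < w * ω` with `p` at `γ + δ + w`. Since `w` absorbs every
smaller summand, `δ + w` is always a positive multiple `w * m`, so for `γ = w * N` these positions
are exactly the `w * n` with `n > N`; conversely any `γ < w * ω` lies below some `w * m`, and
`w * n` with `n > m` is reached with `δ = w * (n - 1) - γ`. So the antecedent says precisely that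
`p` holds at infinitely many `w * n`.
-/

section Semantics

variable {σ : Ordinal → Set ℕ}

lemma ltlSat_top (β : Ordinal) : LTLSat σ .top β := by
  simp [LTLFormula.top, LTLSat]

lemma ltlSat_implies (φ ψ : LTLFormula) (β : Ordinal) :
    LTLSat σ (φ.implies ψ) β ↔ (LTLSat σ φ β → LTLSat σ ψ β) := by
  simp only [LTLFormula.implies, LTLSat]
  tauto

lemma ltlSat_diamond {β : Ordinal} (h : β ≤ ω ^ ω) (φ : LTLFormula) (α : Ordinal) :
    LTLSat σ (.diamond β h φ) α ↔ ∃ γ < β, LTLSat σ φ (α + γ) := by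
  simp [LTLFormula.diamond, LTLSat, ltlSat_top]

lemma ltlSat_box {β : Ordinal} (h : β ≤ ω ^ ω) (φ : LTLFormula) (α : Ordinal) :
    LTLSat σ (.box β h φ) α ↔ ∀ γ < β, LTLSat σ φ (α + γ) := by
  simp [LTLFormula.box, ltlSat_diamond, LTLSat]

end Semantics

section OmegaPow

variable {a : Ordinal}

lemma omega0_opow_mul_nat_lt_mul_omega0 (a : Ordinal) (n : ℕ) : ω ^ a * n < ω ^ a * ω :=
  mul_lt_mul_of_pos_left (natCast_lt_omega0 n) (opow_pos a omega0_pos)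

lemma exists_add_omega0_opow_eq_mul_nat {δ : Ordinal} (hδ : δ < ω ^ a * ω) :
    ∃ m : ℕ, 0 < m ∧ δ + ω ^ a = ω ^ a * m := by
  have hw : ω ^ a ≠ 0 := (opow_pos a omega0_pos).ne'
  obtain ⟨m, hm⟩ := lt_omega0.1 ((lt_mul_iff_div_lt hw).1 hδ)
  refine ⟨m + 1, m.succ_pos, ?_⟩
  have hmod : ω ^ a * m + δ % ω ^ a = δ := hm ▸ div_add_mod δ (ω ^ a)
  -- `ω ^ a` absorbs the remainder `δ % ω ^ a < ω ^ a`.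
  calc δ + ω ^ a = ω ^ a * m + (δ % ω ^ a + ω ^ a) := by rw [← add_assoc, hmod]
    _ = ω ^ a * m + ω ^ a := by rw [add_of_omega0_opow_le (mod_lt δ hw) le_rfl]
    _ = ω ^ a * ((m + 1 : ℕ) : Ordinal) := by push_cast; rw [mul_add_one]

lemma forall_exists_add_omega0_opow_iff_infinite (P : Ordinal → Prop) :
    (∀ γ < ω ^ a * ω, ∃ δ < ω ^ a * ω, P (γ + δ + ω ^ a)) ↔
      {n : ℕ | 1 ≤ n ∧ P (ω ^ a * n)}.Infinite := by
  constructor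
  · intro h
    refine Set.infinite_of_forall_exists_gt fun N ↦ ?_
    obtain ⟨δ, hδ, hP⟩ := h _ (omega0_opow_mul_nat_lt_mul_omega0 a N)
    obtain ⟨m, hm, hδm⟩ := exists_add_omega0_opow_eq_mul_nat hδ
    refine ⟨N + m, ⟨by omega, ?_⟩, by omega⟩
    rwa [add_assoc, hδm, ← mul_add, ← Nat.cast_add] at hP
  · intro hinf γ hγ
    obtain ⟨c, hc, hγc⟩ := (lt_mul_iff_of_isSuccLimit isSuccLimit_omega0).1 hγ
    obtain ⟨m, rfl⟩ := lt_omega0.1 hc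
    obtain ⟨n, ⟨hn, hPn⟩, hmn⟩ := hinf.exists_gt m
    obtain ⟨n, rfl⟩ := Nat.exists_eq_add_of_le' hn
    have hγn : γ ≤ ω ^ a * n := hγc.le.trans (by gcongr; exact_mod_cast Nat.le_of_lt_succ hmn)
    refine ⟨ω ^ a * n - γ,
      (Ordinal.sub_le_self _ _).trans_lt (omega0_opow_mul_nat_lt_mul_omega0 a n), ?_⟩
    rwa [Ordinal.add_sub_cancel_of_le hγn, ← mul_add_one, ← Nat.cast_add_one]

end OmegaPow

theorem box_diamond_implies_iff_general (k' : ℕ)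
    (p q : ℕ) (σ : Ordinal → Set ℕ) :
    LTLSat σ
      ((LTLFormula.box (Ordinal.omega0 ^ ((k' + 1 : ℕ) : Ordinal))
          (le_of_lt (omega0_pow_nat_lt (k' + 1)))
          (LTLFormula.diamond (Ordinal.omega0 ^ ((k' + 1 : ℕ) : Ordinal))
            (le_of_lt (omega0_pow_nat_lt (k' + 1)))
            (LTLFormula.next (Ordinal.omega0 ^ (k' : Ordinal)) (omega0_pow_nat_lt k')
              (.atom p)))).implies
        (LTLFormula.next (Ordinal.omega0 ^ ((k' + 1 : ℕ) : Ordinal))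
          (omega0_pow_nat_lt (k' + 1)) (.atom q))) 0 ↔
      ({n : ℕ | 1 ≤ n ∧ p ∈ σ (Ordinal.omega0 ^ (k' : Ordinal) * (n : Ordinal))}.Infinite →
        q ∈ σ (Ordinal.omega0 ^ ((k' + 1 : ℕ) : Ordinal))) := by
  have hsucc : ω ^ ((k' + 1 : ℕ) : Ordinal) = ω ^ (k' : Ordinal) * ω := by
    rw [Nat.cast_add_one, ← Order.succ_eq_add_one, opow_succ]
  simp only [ltlSat_implies, ltlSat_box, ltlSat_diamond, LTLSat, zero_add]
  rw [hsucc, forall_exists_add_omega0_opow_iff_infinite fun β ↦ p ∈ σ β]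

/-- `σ, 0 ⊨ (□^{ω^(k'+1)} ◇^{ω^(k'+1)} X^{ω^(k')} p) ⇒ (X^{ω^(k'+1)} q)` iff:
if `p` holds at `ω^(k') · n` for infinitely many `n ≥ 1` then `q` holds at `ω^(k'+1)`. -/
theorem box_diamond_implies_iff (k k' : ℕ) (hk : 2 ≤ k) (hk'₁ : 1 ≤ k') (hk'₂ : k' ≤ k - 2)
    (p q : ℕ) (σ : Ordinal → Set ℕ) :
    LTLSat σ
      ((LTLFormula.box (Ordinal.omega0 ^ ((k' + 1 : ℕ) : Ordinal))
          (le_of_lt (omega0_pow_nat_lt (k' + 1)))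
          (LTLFormula.diamond (Ordinal.omega0 ^ ((k' + 1 : ℕ) : Ordinal))
            (le_of_lt (omega0_pow_nat_lt (k' + 1)))
            (LTLFormula.next (Ordinal.omega0 ^ (k' : Ordinal)) (omega0_pow_nat_lt k')
              (.atom p)))).implies
        (LTLFormula.next (Ordinal.omega0 ^ ((k' + 1 : ℕ) : Ordinal))
          (omega0_pow_nat_lt (k' + 1)) (.atom q))) 0 ↔
      ({n : ℕ | 1 ≤ n ∧ p ∈ σ (Ordinal.omega0 ^ (k' : Ordinal) * (n : Ordinal))}.Infinite →
        q ∈ σ (Ordinal.omega0 ^ ((k' + 1 : ℕ) : Ordinal))) :=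
  box_diamond_implies_iff_general k' p q σ
end
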